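/- The inverse monoid $S_c$ (pairs $(\Delta, g)$ with $\Delta$ $c$-closed containing $1$ and $g$) is $E$-unitary: if $e$ is an idempotent and $e \leq s$ in the natural partial order, then $s$ is an idempotent. Equivalently, the projection $(\Delta, g) \mapsto g$ onto $G$ is a monoid homomorphism whose preimage of $1$ is exactly the set of idempotents. -/

import Mathlib

open scoped Pointwise

variable {G : Type*} [Group G]

/-- The set of pairs `(Δ, g)` with `Δ` a `c`-closed subset of `G` containing `1` and `g`. -/
def SC (c : ClosureOperator (Set G)) : Type _ :=
  {p : Set G × G // c p.1 = p.1 ∧ (1 : G) ∈ p.1 ∧ p.2 ∈ p.1}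

/-- Multiplication `(Δ, g)(Ξ, h) = (c (Δ ∪ gΞ), gh)`. -/
def SCmul (c : ClosureOperator (Set G)) (s t : SC c) : SC c :=
  ⟨(c (s.1.1 ∪ s.1.2 • t.1.1), s.1.2 * t.1.2), by
    refine ⟨c.idempotent _, ?_, ?_⟩
    · exact c.le_closure _ (Or.inl s.2.2.1)
    · exact c.le_closure _ (Or.inr (by
        simpa [smul_eq_mul] using Set.smul_mem_smul_set (a := s.1.2) t.2.2.2))⟩

/-- Inversion `(Δ, g)⁻¹ = (g⁻¹Δ, g⁻¹)` (needs `G`-invariance of `c`). -/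
def SCinv (c : ClosureOperator (Set G))
    (hinv : ∀ (g : G) (A : Set G), c (g • A) = g • c A) (s : SC c) : SC c :=
  ⟨(s.1.2⁻¹ • s.1.1, s.1.2⁻¹), by
    refine ⟨by rw [hinv, s.2.1], ?_, ?_⟩
    · exact Set.mem_smul_set.mpr ⟨s.1.2, s.2.2.2, by simp⟩
    · exact Set.mem_smul_set.mpr ⟨1, s.2.2.1, by simp⟩⟩

/-- The identity element `(c {1}, 1)`. -/
def SCone (c : ClosureOperator (Set G)) : SC c :=
  ⟨(c {1}, 1), c.idempotent _, c.le_closure _ rfl, c.le_closure _ rfl⟩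

/-- The candidate maximum `(c {1, g}, g)` of the `σ`-class of `(Δ, g)`. -/
def SCm (c : ClosureOperator (Set G)) (s : SC c) : SC c :=
  ⟨(c {1, s.1.2}, s.1.2), c.idempotent _, c.le_closure _ (Or.inl rfl),
    c.le_closure _ (Or.inr rfl)⟩

/-! The group coordinate is multiplicative, and since `c Δ = Δ`, squaring `(Δ, g)` gives
`(Δ ∪ gΔ, g²)`; so `(Δ, g)` is idempotent exactly when `g = 1`. If `e e⁻¹ s = e` with `e`
idempotent, the group coordinate of `s` is therefore `1`, and `s` is idempotent. -/

namespace SC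

variable {c : ClosureOperator (Set G)}

theorem mul_snd (s t : SC c) : (SCmul c s t).1.2 = s.1.2 * t.1.2 := rfl

theorem mul_self_eq_self_iff (s : SC c) : SCmul c s s = s ↔ s.1.2 = 1 := by
  constructor
  · intro h
    exact mul_eq_right.mp (congrArg (fun x : SC c => x.1.2) h)
  · intro hs
    refine Subtype.ext (Prod.ext ?_ ?_)
    · change c (s.1.1 ∪ s.1.2 • s.1.1) = s.1.1
      rw [hs, one_smul, Set.union_self, s.2.1]
    · change s.1.2 * s.1.2 = s.1.2
      rw [hs, mul_one]

theorem mul_self_eq_self_of_mul_inv_mul_eq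
    (hinv : ∀ (g : G) (A : Set G), c (g • A) = g • c A) {e s : SC c}
    (he : SCmul c e e = e) (hle : SCmul c (SCmul c e (SCinv c hinv e)) s = e) :
    SCmul c s s = s := by
  have he₁ : e.1.2 = 1 := (mul_self_eq_self_iff e).mp he
  have hsnd : e.1.2 * e.1.2⁻¹ * s.1.2 = e.1.2 := congrArg (fun x : SC c => x.1.2) hle
  rw [he₁, inv_one, one_mul, one_mul] at hsnd
  exact (mul_self_eq_self_iff s).mpr hsnd

end SC

/-- `S_c` is `E`-unitary: anything above an idempotent in the natural partial order is
idempotent; equivalently, the projection onto the second coordinate is a monoid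
homomorphism whose preimage of `1` consists exactly of the idempotents. -/
theorem stmt10 (c : ClosureOperator (Set G))
    (hinv : ∀ (g : G) (A : Set G), c (g • A) = g • c A) :
    (∀ e s : SC c, SCmul c e e = e → SCmul c (SCmul c e (SCinv c hinv e)) s = e →
      SCmul c s s = s) ∧
    (∀ s t : SC c, (SCmul c s t).1.2 = s.1.2 * t.1.2) ∧
    ((SCone c).1.2 = 1) ∧
    (∀ s : SC c, s.1.2 = 1 ↔ SCmul c s s = s) :=
  ⟨fun _ _ => SC.mul_self_eq_self_of_mul_inv_mul_eq hinv, SC.mul_snd, rfl,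
    fun s => (SC.mul_self_eq_self_iff s).symm⟩
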